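/- If after a call sequence σ agent a is familiar with the secret B of a different agent b, then some agent c ≠ a is familiar with the secret A of a after σ. -/
import Mathlib

/-- A call is an ordered pair of distinct agents (caller, callee). -/
def Call (n : ℕ) : Type := {p : Fin n × Fin n // p.1 ≠ p.2}

namespace Gossip

variable {n : ℕ}

/-- The caller of a call. -/
def caller (c : Call n) : Fin n := c.1.1

/-- The callee of a call. -/
def callee (c : Call n) : Fin n := c.1.2

/-- Agent `a` is involved in call `c`. -/
def involves (c : Call n) (a : Fin n) : Prop := a = caller c ∨ a = callee c

/-- A gossip situation assigns to each agent the set of secrets it is familiar with;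
secrets are identified with the agents holding them. -/
def Situation (n : ℕ) := Fin n → Finset (Fin n)

/-- The initial gossip situation: every agent only holds its own secret. -/
def root : Situation n := fun a => {a}

/-- The effect of a call on a gossip situation: caller and callee share their secrets. -/
def applyCall (c : Call n) (s : Situation n) : Situation n :=
  fun x => if x = caller c ∨ x = callee c then s (caller c) ∪ s (callee c) else s x

/-- The effect of a call sequence on a gossip situation. -/
def applySeq (σ : List (Call n)) (s : Situation n) : Situation n :=
  σ.foldl (fun t c => applyCall c t) s

end Gossip

open Gossip

lemma applyCall_mono {n : ℕ} (c : Call n) (s : Situation n) (x : Fin n) :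
    s x ⊆ applyCall c s x := by
  unfold applyCall
  split
  · next h =>
    rcases h with h | h <;> subst h
    · exact Finset.subset_union_left
    · exact Finset.subset_union_right
  · exact Finset.Subset.refl _

lemma applySeq_append {n : ℕ} (σ : List (Call n)) (c : Call n) (s : Situation n) :
    applySeq (σ ++ [c]) s = applyCall c (applySeq σ s) := by
  simp [applySeq, List.foldl_append]

lemma self_mem {n : ℕ} (σ : List (Call n)) (a : Fin n) : a ∈ applySeq σ root a := by
  suffices h : ∀ (s : Situation n), (∀ x, x ∈ s x) → ∀ x, x ∈ applySeq σ s x by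
    exact h root (fun x => by simp [root]) a
  induction σ with
  | nil => intro s hs x; exact hs x
  | cons c σ ih =>
    intro s hs x
    refine ih _ (fun y => ?_) x
    exact applyCall_mono c s y (hs y)

/-- an agent can learn a new secret only by revealing its own. -/
theorem learning_reveals_own_secret {n : ℕ} (hn : 3 ≤ n) (σ : List (Call n))
    (a b : Fin n) (hab : a ≠ b) (h : b ∈ applySeq σ root a) :
    ∃ c : Fin n, c ≠ a ∧ a ∈ applySeq σ root c := by
  induction σ using List.reverseRecOn with
  | nil =>
    simp [applySeq, root] at h
    exact absurd h.symm hab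
  | append_singleton σ c ih =>
    rw [applySeq_append] at h ⊢
    by_cases hinv : a = caller c ∨ a = callee c
    · rw [show applyCall c (applySeq σ root) a
          = applySeq σ root (caller c) ∪ applySeq σ root (callee c) from if_pos hinv] at h
      rcases Finset.mem_union.mp h with h' | h'
      · by_cases hc : caller c = a
        · rw [hc] at h'
          obtain ⟨d, hd, hda⟩ := ih h'
          exact ⟨d, hd, applyCall_mono c _ d hda⟩
        · refine ⟨caller c, hc, ?_⟩
          have : a ∈ applySeq σ root (caller c) ∪ applySeq σ root (callee c) := by
            rcases hinv with h | h <;> subst h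
            · exact Finset.mem_union_left _ (self_mem σ _)
            · exact Finset.mem_union_right _ (self_mem σ _)
          rwa [show applyCall c (applySeq σ root) (caller c)
            = applySeq σ root (caller c) ∪ applySeq σ root (callee c) from if_pos (Or.inl rfl)]
      · by_cases hc : callee c = a
        · rw [hc] at h'
          obtain ⟨d, hd, hda⟩ := ih h'
          exact ⟨d, hd, applyCall_mono c _ d hda⟩
        · refine ⟨callee c, hc, ?_⟩
          have : a ∈ applySeq σ root (caller c) ∪ applySeq σ root (callee c) := by
            rcases hinv with h | h <;> subst h
            · exact Finset.mem_union_left _ (self_mem σ _)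
            · exact Finset.mem_union_right _ (self_mem σ _)
          rwa [show applyCall c (applySeq σ root) (callee c)
            = applySeq σ root (caller c) ∪ applySeq σ root (callee c) from if_pos (Or.inr rfl)]
    · rw [show applyCall c (applySeq σ root) a = applySeq σ root a from if_neg hinv] at h
      obtain ⟨d, hd, hda⟩ := ih h
      exact ⟨d, hd, applyCall_mono c _ d hda⟩
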